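/- arXiv:0806.3783 — 3 statements merged into one kernel-verified Lean document; each statement's English description precedes it below -/
import Mathlib

section
/- Let D be a dense subspace of a Hilbert space H, let V be a normed space continuously embedded in H in the sense that D ⊆ V with ‖u‖_H ≤ C‖u‖_V for u in D, and let W be a Banach space into which H embeds compactly, i.e., the inclusion H → W is compact. Suppose that for every ε > 0 there exists C_ε > 0 such that ‖u‖_H² ≤ ε ‖u‖_V² + C_ε ‖u‖_W² for all u ∈ D. Then the embedding (D, ‖·‖_V) → H is a compact operator. -/
/-!
On a bounded subset of `V` the term `ε ‖u - v‖²` of the estimate is uniformly small once `ε` is,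
so `e u` and `e v` are `δ`-close as soon as `iW (e u)` and `iW (e v)` are close enough. Hence a
finite net of the relatively compact set `iW (e (ball 0 1))` pulls back to a finite `δ`-net of
`e (ball 0 1)`, which is therefore totally bounded, and relatively compact as `H` is complete.
-/

open Metric

theorem TotallyBounded.of_image_of_forall_dist_lt {α β : Type*} [PseudoMetricSpace α]
    [PseudoMetricSpace β] {f : α → β} {s : Set α} (hfs : TotallyBounded (f '' s))
    (hf : ∀ δ > 0, ∃ η > 0, ∀ x ∈ s, ∀ y ∈ s, dist (f x) (f y) < η → dist x y < δ) :
    TotallyBounded s := by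
  rw [totallyBounded_iff]
  intro δ hδ
  obtain ⟨η, hη, hfη⟩ := hf δ hδ
  obtain ⟨t, hts, htfin, htcov⟩ := Set.exists_subset_image_finite_and.mp
    (finite_approx_of_totallyBounded hfs η hη)
  refine ⟨t, htfin, fun x hx ↦ ?_⟩
  obtain ⟨_, ⟨y, hyt, rfl⟩, hxy⟩ := Set.mem_iUnion₂.mp (htcov (Set.mem_image_of_mem f hx))
  exact Set.mem_iUnion₂.mpr ⟨y, hyt, hfη x hx y (hts hyt) hxy⟩

theorem exists_forall_dist_lt_of_compactness_estimate {V H W F G : Type*}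
    [SeminormedAddCommGroup V] [SeminormedAddCommGroup H] [SeminormedAddCommGroup W]
    [FunLike F V H] [AddMonoidHomClass F V H] [FunLike G H W] [AddMonoidHomClass G H W]
    {e : F} {T : G}
    (hest : ∀ ε > (0 : ℝ), ∃ Cε > (0 : ℝ), ∀ u : V, ‖e u‖ ^ 2 ≤ ε * ‖u‖ ^ 2 + Cε * ‖T (e u)‖ ^ 2)
    {s : Set V} (hs : Bornology.IsBounded s) {δ : ℝ} (hδ : 0 < δ) :
    ∃ η > 0, ∀ u ∈ s, ∀ v ∈ s, dist (T (e u)) (T (e v)) < η → dist (e u) (e v) < δ := by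
  obtain ⟨R, hR⟩ := isBounded_iff.mp hs
  obtain ⟨Cε, hCε, hCεest⟩ := hest (δ ^ 2 / (2 * (R ^ 2 + 1))) (by positivity)
  refine ⟨δ / √(2 * Cε), by positivity, fun u hu v hv huv ↦ ?_⟩
  rw [dist_eq_norm, ← map_sub, ← map_sub] at huv
  rw [dist_eq_norm, ← map_sub]
  have hV : ‖u - v‖ ^ 2 ≤ R ^ 2 :=
    pow_le_pow_left₀ (norm_nonneg _) (dist_eq_norm u v ▸ hR hu hv) 2
  have hW : ‖T (e (u - v))‖ ^ 2 ≤ δ ^ 2 / (2 * Cε) := by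
    rw [← Real.sq_sqrt (by positivity : 0 ≤ 2 * Cε), ← div_pow]
    exact pow_le_pow_left₀ (norm_nonneg _) huv.le 2
  refine lt_of_pow_lt_pow_left₀ 2 hδ.le ((hCεest (u - v)).trans_lt ?_)
  calc δ ^ 2 / (2 * (R ^ 2 + 1)) * ‖u - v‖ ^ 2 + Cε * ‖T (e (u - v))‖ ^ 2
      ≤ δ ^ 2 / (2 * (R ^ 2 + 1)) * R ^ 2 + Cε * (δ ^ 2 / (2 * Cε)) := by gcongr
    _ < δ ^ 2 := by
      field_simp
      nlinarith [sq_nonneg R]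

theorem compact_embedding_of_compactness_estimate_general
    {H V W : Type*}
    [NormedAddCommGroup H] [InnerProductSpace ℂ H] [CompleteSpace H]
    [NormedAddCommGroup V] [NormedSpace ℂ V]
    [NormedAddCommGroup W] [NormedSpace ℂ W]
    (e : V →ₗ[ℂ] H)
    (C : ℝ) (hCbound : ∀ u : V, ‖e u‖ ≤ C * ‖u‖)
    (iW : H →L[ℂ] W) (hiWcpt : IsCompactOperator ⇑iW)
    (hest : ∀ ε > (0 : ℝ), ∃ Cε > (0 : ℝ),
      ∀ u : V, ‖e u‖ ^ 2 ≤ ε * ‖u‖ ^ 2 + Cε * ‖iW (e u)‖ ^ 2) :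
    IsCompactOperator ⇑e := by
  rw [isCompactOperator_iff_isCompact_closure_image_ball e one_pos]
  have hbounded : Bornology.IsBounded (e '' ball 0 1) :=
    (e.mkContinuous C hCbound).lipschitz.isBounded_image isBounded_ball
  obtain ⟨K, hK, hKsub⟩ := hiWcpt.image_subset_compact_of_bounded hbounded
  refine (TotallyBounded.closure ?_).isCompact_of_isClosed isClosed_closure
  refine (hK.totallyBounded.subset hKsub).of_image_of_forall_dist_lt fun δ hδ ↦ ?_
  obtain ⟨η, hη, hclose⟩ :=
    exists_forall_dist_lt_of_compactness_estimate hest isBounded_ball hδ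
  exact ⟨η, hη, by rintro _ ⟨u, hu, rfl⟩ _ ⟨v, hv, rfl⟩; exact hclose u hu v hv⟩

/-- A compactness estimate implies compactness of the embedding.  Here the dense subspace `D` of
`H`, equipped with the norm `‖·‖_V`, is modeled by a normed space `V` together with an injective
linear map `e : V →ₗ[ℂ] H` with dense range satisfying `‖e u‖ ≤ C‖u‖`; `W` is a Banach space into
which `H` embeds compactly via the injective map `iW`. -/
theorem compact_embedding_of_compactness_estimate
    {H V W : Type*}
    [NormedAddCommGroup H] [InnerProductSpace ℂ H] [CompleteSpace H]
    [NormedAddCommGroup V] [NormedSpace ℂ V]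
    [NormedAddCommGroup W] [NormedSpace ℂ W] [CompleteSpace W]
    (e : V →ₗ[ℂ] H) (he : Function.Injective e) (hdense : Dense (Set.range e))
    (C : ℝ) (hC : 0 < C) (hCbound : ∀ u : V, ‖e u‖ ≤ C * ‖u‖)
    (iW : H →L[ℂ] W) (hiW : Function.Injective iW) (hiWcpt : IsCompactOperator ⇑iW)
    (hest : ∀ ε > (0 : ℝ), ∃ Cε > (0 : ℝ),
      ∀ u : V, ‖e u‖ ^ 2 ≤ ε * ‖u‖ ^ 2 + Cε * ‖iW (e u)‖ ^ 2) :
    IsCompactOperator ⇑e :=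
  compact_embedding_of_compactness_estimate_general e C hCbound iW hiWcpt hest
end

section
/- Let H₁, H₂, H₃ be Hilbert spaces and S : H₁ → H₂, T : H₂ → H₃ densely defined closed operators with ran(S) = ker(T) closed, and suppose the associated Laplacian □ = T*T + SS* has bounded inverse N. Then N = (S*N)*(S*N) + (T*N')(T*N')*, where N' denotes the inverse Laplacian at the next level, i.e., N can be expressed through the canonical solution operators S*N and T*N'. -/
/-!
Because `ran S ⊆ ker T ⊥ ran T†`, pairing `u = T†T N u + SS† N u` with `T† N' v` kills the second
term and leaves `⟪T N u, TT† N' v⟫`; one level up, `TT† N' v = v - U†U N' v`, and `ran T ⊆ ker U`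
kills the `U`-term, so `(T† N')† = T N`. Paired with `v`, both sides of the identity then equal the
energy `⟪S† N u, S† N v⟫ + ⟪T N u, T N v⟫ = ⟪N u, □ N v⟫ = ⟪N u, v⟫`.
-/

open scoped InnerProductSpace

namespace LinearPMap

variable {𝕜 E F G : Type*} [RCLike 𝕜]
  [NormedAddCommGroup E] [InnerProductSpace 𝕜 E]
  [NormedAddCommGroup F] [InnerProductSpace 𝕜 F] [CompleteSpace F]
  [NormedAddCommGroup G] [InnerProductSpace 𝕜 G]

theorem inner_apply_adjoint_apply_eq_zero_of_range_le {S : E →ₗ.[𝕜] F} {T : F →ₗ.[𝕜] G}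
    (hT : Dense (T.domain : Set F))
    (hST : LinearMap.range S.toFun ≤ (LinearMap.ker T.toFun).map T.domain.subtype)
    (x : S.domain) (y : T†.domain) : ⟪S x, T† y⟫_𝕜 = 0 := by
  obtain ⟨w, hw, hwx⟩ := hST ⟨x, rfl⟩
  change ⟪S.toFun x, T† y⟫_𝕜 = 0
  rw [← hwx, Submodule.coe_subtype, ← (adjoint_isFormalAdjoint hT).symm w y,
    show T w = 0 from hw, inner_zero_left]

/-- `□ N = id` for the Laplacian `□ = T†T + SS†`. -/
structure IsLaplacianRightInverse [CompleteSpace E] (S : E →ₗ.[𝕜] F) (T : F →ₗ.[𝕜] G)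
    (N : F → F) : Prop where
  mem_domain : ∀ u, N u ∈ T.domain
  mem_adjoint_domain : ∀ u, N u ∈ S†.domain
  apply_mem_adjoint_domain : ∀ u, T ⟨N u, mem_domain u⟩ ∈ T†.domain
  adjoint_apply_mem_domain : ∀ u, S† ⟨N u, mem_adjoint_domain u⟩ ∈ S.domain
  laplacian_apply : ∀ u, u = T† ⟨T ⟨N u, mem_domain u⟩, apply_mem_adjoint_domain u⟩ +
    S ⟨S† ⟨N u, mem_adjoint_domain u⟩, adjoint_apply_mem_domain u⟩

namespace IsLaplacianRightInverse

variable [CompleteSpace E] {S : E →ₗ.[𝕜] F} {T : F →ₗ.[𝕜] G} {N : F → F}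

theorem inner_apply_eq (hS : Dense (S.domain : Set E)) (hT : Dense (T.domain : Set F))
    (hN : IsLaplacianRightInverse S T N) (u v : F) :
    ⟪N u, v⟫_𝕜 = ⟪(S† ⟨N u, hN.mem_adjoint_domain u⟩ : E), S† ⟨N v, hN.mem_adjoint_domain v⟩⟫_𝕜 +
      ⟪T ⟨N u, hN.mem_domain u⟩, T ⟨N v, hN.mem_domain v⟩⟫_𝕜 := by
  conv_lhs => rw [hN.laplacian_apply v]
  rw [inner_add_right, add_comm, ← (adjoint_isFormalAdjoint hT).symm ⟨N u, _⟩ ⟨_, _⟩,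
    ← adjoint_isFormalAdjoint hS ⟨N u, _⟩ ⟨_, _⟩]

theorem inner_adjoint_apply (hT : Dense (T.domain : Set F))
    (hST : LinearMap.range S.toFun ≤ (LinearMap.ker T.toFun).map T.domain.subtype)
    (hN : IsLaplacianRightInverse S T N) (u : F) (y : T†.domain) (hy : T† y ∈ T.domain) :
    ⟪u, T† y⟫_𝕜 = ⟪T ⟨N u, hN.mem_domain u⟩, T ⟨T† y, hy⟩⟫_𝕜 := by
  conv_lhs => rw [hN.laplacian_apply u]
  rw [inner_add_left, inner_apply_adjoint_apply_eq_zero_of_range_le hT hST, add_zero]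
  exact adjoint_isFormalAdjoint hT ⟨_, _⟩ ⟨_, hy⟩

variable {H : Type*} [NormedAddCommGroup H] [InnerProductSpace 𝕜 H]
  [CompleteSpace G] {U : G →ₗ.[𝕜] H} {N' : G → G}

theorem inner_adjoint_apply_next (hT : Dense (T.domain : Set F)) (hU : Dense (U.domain : Set G))
    (hST : LinearMap.range S.toFun ≤ (LinearMap.ker T.toFun).map T.domain.subtype)
    (hTU : LinearMap.range T.toFun ≤ (LinearMap.ker U.toFun).map U.domain.subtype)
    (hN : IsLaplacianRightInverse S T N) (hN' : IsLaplacianRightInverse T U N') (u : F) (v : G) :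
    ⟪u, T† ⟨N' v, hN'.mem_adjoint_domain v⟩⟫_𝕜 = ⟪T ⟨N u, hN.mem_domain u⟩, v⟫_𝕜 := by
  rw [hN.inner_adjoint_apply hT hST u _ (hN'.adjoint_apply_mem_domain v)]
  conv_rhs => rw [hN'.laplacian_apply v]
  rw [inner_add_right, inner_apply_adjoint_apply_eq_zero_of_range_le hU hTU, zero_add]

end IsLaplacianRightInverse

end LinearPMap

open ContinuousLinearMap LinearPMap

theorem neumann_eq_canonical_solution_operators_general
    {H₁ H₂ H₃ H₄ : Type*}
    [NormedAddCommGroup H₁] [InnerProductSpace ℂ H₁] [CompleteSpace H₁]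
    [NormedAddCommGroup H₂] [InnerProductSpace ℂ H₂] [CompleteSpace H₂]
    [NormedAddCommGroup H₃] [InnerProductSpace ℂ H₃] [CompleteSpace H₃]
    [NormedAddCommGroup H₄] [InnerProductSpace ℂ H₄]
    (S : H₁ →ₗ.[ℂ] H₂) (T : H₂ →ₗ.[ℂ] H₃) (U : H₃ →ₗ.[ℂ] H₄)
    (hSdense : Dense (S.domain : Set H₁)) (hTdense : Dense (T.domain : Set H₂))
    (hUdense : Dense (U.domain : Set H₃))
    (hST : LinearMap.range S.toFun = (LinearMap.ker T.toFun).map T.domain.subtype)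
    (hTU : LinearMap.range T.toFun = (LinearMap.ker U.toFun).map U.domain.subtype)
    (N : H₂ →L[ℂ] H₂) (N' : H₃ →L[ℂ] H₃)
    -- `N` inverts `□ = T*T + SS*`:
    (hN₁ : ∀ u : H₂, N u ∈ T.domain)
    (hN₂ : ∀ u : H₂, N u ∈ S.adjoint.domain)
    (hN₃ : ∀ u : H₂, T ⟨N u, hN₁ u⟩ ∈ T.adjoint.domain)
    (hN₄ : ∀ u : H₂, S.adjoint ⟨N u, hN₂ u⟩ ∈ S.domain)
    (hNinv : ∀ u : H₂,
      u = T.adjoint ⟨T ⟨N u, hN₁ u⟩, hN₃ u⟩ + S ⟨S.adjoint ⟨N u, hN₂ u⟩, hN₄ u⟩)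
    -- `N'` inverts `□' = U*U + TT*`:
    (hN'₁ : ∀ v : H₃, N' v ∈ U.domain)
    (hN'₂ : ∀ v : H₃, N' v ∈ T.adjoint.domain)
    (hN'₃ : ∀ v : H₃, U ⟨N' v, hN'₁ v⟩ ∈ U.adjoint.domain)
    (hN'₄ : ∀ v : H₃, T.adjoint ⟨N' v, hN'₂ v⟩ ∈ T.domain)
    (hN'inv : ∀ v : H₃,
      v = U.adjoint ⟨U ⟨N' v, hN'₁ v⟩, hN'₃ v⟩ + T ⟨T.adjoint ⟨N' v, hN'₂ v⟩, hN'₄ v⟩)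
    -- the canonical solution operators `A = S*N` and `B = T*N'`:
    (A : H₂ →L[ℂ] H₁) (hA : ∀ u : H₂, A u = S.adjoint ⟨N u, hN₂ u⟩)
    (B : H₃ →L[ℂ] H₂) (hB : ∀ v : H₃, B v = T.adjoint ⟨N' v, hN'₂ v⟩) :
    N = (adjoint A) ∘L A + B ∘L (adjoint B) := by
  have hN : IsLaplacianRightInverse S T N := ⟨hN₁, hN₂, hN₃, hN₄, hNinv⟩
  have hN' : IsLaplacianRightInverse T U N' := ⟨hN'₁, hN'₂, hN'₃, hN'₄, hN'inv⟩
  have hB_adjoint (u : H₂) : adjoint B u = T ⟨N u, hN₁ u⟩ :=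
    ext_inner_right ℂ fun v => by
      rw [adjoint_inner_left, hB, hN.inner_adjoint_apply_next hTdense hUdense hST.le hTU.le hN']
  ext u
  refine ext_inner_right ℂ fun v => ?_
  rw [hN.inner_apply_eq hSdense hTdense, _root_.add_apply, inner_add_left, comp_apply, comp_apply,
    adjoint_inner_left, ← adjoint_inner_right B, hA, hA, hB_adjoint, hB_adjoint]

/-- Abstract form of `N_q = (∂̄*N_q)*(∂̄*N_q) + (∂̄*N_{q+1})(∂̄*N_{q+1})*`: the Neumann operator
`N` (the bounded inverse of the Laplacian `□ = T*T + SS*`) is expressed through the canonical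
solution operators `A = S*N` and `B = T*N'`, where `N'` is the bounded inverse of the Laplacian
`□' = U*U + TT*` one level up in the complex `S, T, U`. -/
theorem neumann_eq_canonical_solution_operators
    {H₁ H₂ H₃ H₄ : Type*}
    [NormedAddCommGroup H₁] [InnerProductSpace ℂ H₁] [CompleteSpace H₁]
    [NormedAddCommGroup H₂] [InnerProductSpace ℂ H₂] [CompleteSpace H₂]
    [NormedAddCommGroup H₃] [InnerProductSpace ℂ H₃] [CompleteSpace H₃]
    [NormedAddCommGroup H₄] [InnerProductSpace ℂ H₄] [CompleteSpace H₄]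
    (S : H₁ →ₗ.[ℂ] H₂) (T : H₂ →ₗ.[ℂ] H₃) (U : H₃ →ₗ.[ℂ] H₄)
    (hSdense : Dense (S.domain : Set H₁)) (hTdense : Dense (T.domain : Set H₂))
    (hUdense : Dense (U.domain : Set H₃))
    (hSclosed : S.IsClosed) (hTclosed : T.IsClosed) (hUclosed : U.IsClosed)
    (hST : LinearMap.range S.toFun = (LinearMap.ker T.toFun).map T.domain.subtype)
    (hTU : LinearMap.range T.toFun = (LinearMap.ker U.toFun).map U.domain.subtype)
    (hSrange : IsClosed ((LinearMap.range S.toFun : Submodule ℂ H₂) : Set H₂))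
    (hTrange : IsClosed ((LinearMap.range T.toFun : Submodule ℂ H₃) : Set H₃))
    (N : H₂ →L[ℂ] H₂) (N' : H₃ →L[ℂ] H₃)
    -- `N` inverts `□ = T*T + SS*`:
    (hN₁ : ∀ u : H₂, N u ∈ T.domain)
    (hN₂ : ∀ u : H₂, N u ∈ S.adjoint.domain)
    (hN₃ : ∀ u : H₂, T ⟨N u, hN₁ u⟩ ∈ T.adjoint.domain)
    (hN₄ : ∀ u : H₂, S.adjoint ⟨N u, hN₂ u⟩ ∈ S.domain)
    (hNinv : ∀ u : H₂,
      u = T.adjoint ⟨T ⟨N u, hN₁ u⟩, hN₃ u⟩ + S ⟨S.adjoint ⟨N u, hN₂ u⟩, hN₄ u⟩)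
    -- `N'` inverts `□' = U*U + TT*`:
    (hN'₁ : ∀ v : H₃, N' v ∈ U.domain)
    (hN'₂ : ∀ v : H₃, N' v ∈ T.adjoint.domain)
    (hN'₃ : ∀ v : H₃, U ⟨N' v, hN'₁ v⟩ ∈ U.adjoint.domain)
    (hN'₄ : ∀ v : H₃, T.adjoint ⟨N' v, hN'₂ v⟩ ∈ T.domain)
    (hN'inv : ∀ v : H₃,
      v = U.adjoint ⟨U ⟨N' v, hN'₁ v⟩, hN'₃ v⟩ + T ⟨T.adjoint ⟨N' v, hN'₂ v⟩, hN'₄ v⟩)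
    -- the canonical solution operators `A = S*N` and `B = T*N'`:
    (A : H₂ →L[ℂ] H₁) (hA : ∀ u : H₂, A u = S.adjoint ⟨N u, hN₂ u⟩)
    (B : H₃ →L[ℂ] H₂) (hB : ∀ v : H₃, B v = T.adjoint ⟨N' v, hN'₂ v⟩) :
    N = (adjoint A) ∘L A + B ∘L (adjoint B) :=
  neumann_eq_canonical_solution_operators_general S T U hSdense hTdense hUdense hST hTU N N' hN₁ hN₂
    hN₃ hN₄ hNinv hN'₁ hN'₂ hN'₃ hN'₄ hN'inv A hA B hB
end

section
/- Let K ⊆ ℂ be compact and π : K × S¹ → ℂ the projection onto the first factor, viewing E = K × S¹ ⊆ ℂ². If K satisfies property (P) in ℂ, then E satisfies property (P) in ℂ². -/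
open Complex

/-- The Levi form (complex Hessian quadratic form) of a real-valued function `f` on a complex
normed space, at the point `z` in the direction `w`:
`Σ (∂²f/∂z_j∂z̄_k)(z) w_j w̄_k = (1/4)(D²f(z)(w,w) + D²f(z)(iw,iw))`,
where `D²` is the real second Fréchet derivative. -/
noncomputable def leviForm {X : Type*} [NormedAddCommGroup X] [NormedSpace ℂ X]
    (f : X → ℝ) (z w : X) : ℝ :=
  (1 / 4) * (iteratedFDeriv ℝ 2 f z ![w, w] + iteratedFDeriv ℝ 2 f z ![I • w, I • w])

/-- Catlin's property (P) for a compact set `E` in a complex normed space: for every `M > 0`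
there is a `C²` function `λ`, plurisubharmonic on a neighborhood `U` of `E` and with values in
`[0,1]` there, whose complex Hessian has all eigenvalues at least `M` at every point of `E`. -/
def PropertyP {X : Type*} [NormedAddCommGroup X] [NormedSpace ℂ X] (E : Set X) : Prop :=
  ∀ M > (0 : ℝ), ∃ (U : Set X) (f : X → ℝ),
    IsOpen U ∧ E ⊆ U ∧ ContDiff ℝ 2 f ∧
    (∀ z ∈ U, f z ∈ Set.Icc (0 : ℝ) 1) ∧
    (∀ z ∈ U, ∀ w : X, 0 ≤ leviForm f z w) ∧
    (∀ z ∈ E, ∀ w : X, M * ‖w‖ ^ 2 ≤ leviForm f z w)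

/-! If `λ_A` and `λ_B` witness property (P) of `A` and `B` for the constant `2M`, then
`(λ_A(x) + λ_B(y))/2` witnesses it for `A × B` and the constant `M`: the Levi form splits over the
factors, and `‖u‖² ≤ ‖u₁‖² + ‖u₂‖²` for the sup norm of the product. The circle `|w| = r` has (P)
through `M(|w|² - r²) + 1/2`, whose Levi form is `M|v|²`, on a thin annulus around it. -/

section LeviForm

variable {X Y : Type*} [NormedAddCommGroup X] [NormedSpace ℂ X]
  [NormedAddCommGroup Y] [NormedSpace ℂ Y]

lemma leviForm_add {f g : X → ℝ} (hf : ContDiff ℝ 2 f) (hg : ContDiff ℝ 2 g) (z w : X) :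
    leviForm (fun x => f x + g x) z w = leviForm f z w + leviForm g z w := by
  simp only [leviForm, fun_iteratedFDeriv_add_apply hf.contDiffAt hg.contDiffAt, add_apply]
  ring

lemma leviForm_const_mul (c : ℝ) {f : X → ℝ} (hf : ContDiff ℝ 2 f) (z w : X) :
    leviForm (fun x => c * f x) z w = c * leviForm f z w := by
  simp only [leviForm, ← smul_eq_mul (a := c), iteratedFDeriv_const_smul_apply' hf.contDiffAt,
    smul_apply]
  ring

lemma leviForm_const (c : ℝ) (z w : X) : leviForm (fun _ : X => c) z w = 0 := by
  simp [leviForm, iteratedFDeriv_const_of_ne two_ne_zero c]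

lemma leviForm_comp_clm (g : Y →L[ℂ] X) {f : X → ℝ} (hf : ContDiff ℝ 2 f) (y w : Y) :
    leviForm (fun x => f (g x)) y w = leviForm f (g y) (g w) := by
  have hcomp : ∀ m : Fin 2 → Y,
      iteratedFDeriv ℝ 2 (fun x => f (g x)) y m = iteratedFDeriv ℝ 2 f (g y) (g ∘ m) := fun m => by
    rw [show (fun x => f (g x)) = f ∘ g.restrictScalars ℝ from rfl,
      (g.restrictScalars ℝ).iteratedFDeriv_comp_right hf y le_rfl]
    rfl
  have hpair : ∀ v : Y, g ∘ ![v, v] = ![g v, g v] := fun v => by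
    funext i; fin_cases i <;> rfl
  rw [leviForm, hcomp, hcomp, hpair, hpair, map_smul, leviForm]

lemma leviForm_comp_fst {f : X → ℝ} (hf : ContDiff ℝ 2 f) (p u : X × Y) :
    leviForm (fun q : X × Y => f q.1) p u = leviForm f p.1 u.1 :=
  leviForm_comp_clm (ContinuousLinearMap.fst ℂ X Y) hf p u

lemma leviForm_comp_snd {f : Y → ℝ} (hf : ContDiff ℝ 2 f) (p u : X × Y) :
    leviForm (fun q : X × Y => f q.2) p u = leviForm f p.2 u.2 :=
  leviForm_comp_clm (ContinuousLinearMap.snd ℂ X Y) hf p u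

end LeviForm

lemma iteratedFDeriv_two_norm_sq {F : Type*} [NormedAddCommGroup F] [InnerProductSpace ℝ F]
    (x u : F) : iteratedFDeriv ℝ 2 (fun y : F => ‖y‖ ^ 2) x ![u, u] = 2 * ‖u‖ ^ 2 := by
  have hD : fderiv ℝ (fun y : F => ‖y‖ ^ 2) = ⇑((2 : ℝ) • innerSL ℝ (E := F)) := by
    rw [fderiv_norm_sq]; ext; simp
  rw [iteratedFDeriv_two_apply, hD, ContinuousLinearMap.fderiv]
  simp only [Matrix.cons_val_zero, Matrix.cons_val_one, smul_apply, smul_eq_mul]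
  rw [innerSL_apply_apply, real_inner_self_eq_norm_sq]

lemma leviForm_norm_sq (z v : ℂ) : leviForm (fun w : ℂ => ‖w‖ ^ 2) z v = ‖v‖ ^ 2 := by
  simp only [leviForm, iteratedFDeriv_two_norm_sq, norm_smul, norm_I, one_mul]
  ring

lemma Prod.norm_sq_le {E F : Type*} [SeminormedAddCommGroup E] [SeminormedAddCommGroup F]
    (u : E × F) : ‖u‖ ^ 2 ≤ ‖u.1‖ ^ 2 + ‖u.2‖ ^ 2 := by
  rcases max_choice ‖u.1‖ ‖u.2‖ with h | h <;> rw [Prod.norm_def, h]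
  · exact le_add_of_nonneg_right (sq_nonneg _)
  · exact le_add_of_nonneg_left (sq_nonneg _)

theorem PropertyP.prod {X Y : Type*} [NormedAddCommGroup X] [NormedSpace ℂ X]
    [NormedAddCommGroup Y] [NormedSpace ℂ Y] {A : Set X} {B : Set Y}
    (hA : PropertyP A) (hB : PropertyP B) : PropertyP (A ×ˢ B) := by
  intro M hM
  obtain ⟨U, f, hU, hAU, hf, hf01, hfpsh, hfA⟩ := hA (2 * M) (by positivity)
  obtain ⟨V, g, hV, hBV, hg, hg01, hgpsh, hgB⟩ := hB (2 * M) (by positivity)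
  have hf₁ : ContDiff ℝ 2 fun p : X × Y => f p.1 := hf.comp contDiff_fst
  have hg₂ : ContDiff ℝ 2 fun p : X × Y => g p.2 := hg.comp contDiff_snd
  have hlevi : ∀ p u : X × Y, leviForm (fun q => 1 / 2 * f q.1 + 1 / 2 * g q.2) p u
      = 1 / 2 * leviForm f p.1 u.1 + 1 / 2 * leviForm g p.2 u.2 := fun p u => by
    rw [leviForm_add (contDiff_const.mul hf₁) (contDiff_const.mul hg₂), leviForm_const_mul _ hf₁,
      leviForm_const_mul _ hg₂, leviForm_comp_fst hf, leviForm_comp_snd hg]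
  refine ⟨U ×ˢ V, fun q => 1 / 2 * f q.1 + 1 / 2 * g q.2, hU.prod hV, Set.prod_mono hAU hBV,
    (contDiff_const.mul hf₁).add (contDiff_const.mul hg₂), ?_, ?_, ?_⟩
  · rintro p ⟨hp₁, hp₂⟩
    obtain ⟨hf0, hf1⟩ := hf01 _ hp₁
    obtain ⟨hg0, hg1⟩ := hg01 _ hp₂
    constructor <;> dsimp only <;> linarith
  · rintro p ⟨hp₁, hp₂⟩ u
    rw [hlevi]
    linarith [hfpsh _ hp₁ u.1, hgpsh _ hp₂ u.2]
  · rintro p ⟨hp₁, hp₂⟩ u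
    rw [hlevi]
    nlinarith [hfA _ hp₁ u.1, hgB _ hp₂ u.2, Prod.norm_sq_le u]

theorem propertyP_sphere (r : ℝ) : PropertyP (Metric.sphere (0 : ℂ) r) := by
  intro M hM
  have hsq : ContDiff ℝ 2 fun w : ℂ => ‖w‖ ^ 2 := contDiff_norm_sq ℝ
  have hlevi : ∀ z v : ℂ, leviForm (fun w => M * ‖w‖ ^ 2 + (1 / 2 - M * r ^ 2)) z v
      = M * ‖v‖ ^ 2 := fun z v => by
    rw [leviForm_add (contDiff_const.mul hsq) contDiff_const, leviForm_const_mul _ hsq,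
      leviForm_norm_sq, leviForm_const, add_zero]
  refine ⟨{w | |‖w‖ ^ 2 - r ^ 2| < 1 / (2 * M)}, fun w => M * ‖w‖ ^ 2 + (1 / 2 - M * r ^ 2),
    isOpen_lt (by fun_prop) continuous_const, fun w hw => ?_,
    (contDiff_const.mul hsq).add contDiff_const, fun w hw => ?_, fun z _ v => ?_, fun z _ v => ?_⟩
  · rw [mem_sphere_zero_iff_norm] at hw
    simp [hw, hM]
  · have hMw : M * |‖w‖ ^ 2 - r ^ 2| < 1 / 2 := by
      calc M * |‖w‖ ^ 2 - r ^ 2| < M * (1 / (2 * M)) := mul_lt_mul_of_pos_left hw hM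
        _ = 1 / 2 := by field_simp
    rw [← abs_of_pos hM, ← abs_mul, abs_lt] at hMw
    constructor <;> nlinarith
  · rw [hlevi]; positivity
  · rw [hlevi]

theorem propertyP_prod_circle_general (K : Set ℂ) (hKP : PropertyP K) :
    PropertyP {p : ℂ × ℂ | p.1 ∈ K ∧ ‖p.2‖ = 1} := by
  have hE : {p : ℂ × ℂ | p.1 ∈ K ∧ ‖p.2‖ = 1} = K ×ˢ Metric.sphere 0 1 := by
    ext p
    simp
  exact hE ▸ hKP.prod (propertyP_sphere 1)

/-- If the compact set `K ⊆ ℂ` satisfies property (P), then `E = K × S¹ ⊆ ℂ²` satisfies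
property (P). -/
theorem propertyP_prod_circle (K : Set ℂ) (hK : IsCompact K) (hKP : PropertyP K) :
    PropertyP {p : ℂ × ℂ | p.1 ∈ K ∧ ‖p.2‖ = 1} :=
  propertyP_prod_circle_general K hKP
end
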